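/- arXiv:2601.02811 — 2 statements merged into one kernel-verified Lean document; each statement's English description precedes it below -/
import Mathlib

section
/- Let (Ω, 𝒜, P) be a probability space and f : Ω → ℝ a measurable function such that ω ↦ exp(t·f(ω)) is P-integrable for all t in some open interval around 0, with Var_P(f) > 0. Let m := ∫ f dP and, for C > 0, S_f(C) := sSup { ∫ f dQ : Q a probability measure with Q ≪ P and KL(Q‖P) ≤ C }. Then for every real k with k < √(2·Var_P(f)) there exists C₀ > 0 such that S_f(C) > m + k·√C for all C ∈ (0, C₀). In particular the coefficient √(2·Var_P(f)) in the small-radius expansion is sharp. -/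
open MeasureTheory ProbabilityTheory Filter Real
open scoped Classical

/-- Kullback--Leibler divergence of `Q` from `P`: `∫ log (dQ/dP) dQ` when `Q ≪ P` and the
log-likelihood ratio is `Q`-integrable, and `⊤` otherwise. -/
noncomputable def klDiv {Ω : Type*} [MeasurableSpace Ω] (Q P : Measure Ω) : EReal :=
  if Q ≪ P ∧ Integrable (llr Q P) Q then ((∫ ω, llr Q P ω ∂Q : ℝ) : EReal) else ⊤

/-- The KL-ball robust value `S_f(C)`: the supremum of `∫ f dQ` over probability measures
`Q ≪ P` with `KL(Q‖P) ≤ C`. -/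
noncomputable def robustValue {Ω : Type*} [MeasurableSpace Ω] (P : Measure Ω) (f : Ω → ℝ)
    (C : ℝ) : ℝ :=
  sSup { x : ℝ | ∃ Q : Measure Ω, IsProbabilityMeasure Q ∧ Q ≪ P ∧
    klDiv Q P ≤ (C : EReal) ∧ x = ∫ ω, f ω ∂Q }

open InformationTheory hiding klDiv
open scoped Topology

/-!
Tilting `P` by a density `1 + ε g`, with `g` bounded and centred, moves the mean of `f` by
`ε ∫ g f` at a cost `KL ≤ ε² ∫ g² / (2c)` as long as the density stays above `c`, because
`klFun y ≤ (y - 1)² / (2c)` for `y ≥ c`. Taking for `g` a centred truncation of `f - ∫ f`, so that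
`∫ g f` is close to `Var f` while `∫ g² ≤ Var f`, and `ε = √(2 c C / Var f)` with `c` close to `1`,
the gain is close to `√(2 Var f · C)`. The exponential moment keeps `S_f(C)` a genuine supremum
rather than the junk value of `sSup` on an unbounded set: integrating Young's inequality
`a b ≤ klFun b + exp a - 1` with `b = dQ/dP` gives `t ∫ f dQ ≤ KL(Q‖P) + ∫ exp (t f) dP - 1`.
-/

lemma mul_le_klFun_add_exp_sub_one (a : ℝ) {b : ℝ} (hb : 0 ≤ b) :
    a * b ≤ klFun b + exp a - 1 := by
  rw [klFun_apply]
  rcases hb.eq_or_lt with rfl | hb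
  · simp [(exp_pos a).le]
  · have h := add_one_le_exp (a - log b)
    rw [exp_sub, exp_log hb, le_div_iff₀ hb] at h
    nlinarith

lemma klFun_le_sq_div {c y : ℝ} (hc : 0 < c) (hc1 : c ≤ 1) (hy : c ≤ y) :
    klFun y ≤ (y - 1) ^ 2 / (2 * c) := by
  set φ : ℝ → ℝ := fun x => (x - 1) ^ 2 / (2 * c) - klFun x
  have hφ : ∀ x, 0 < x → HasDerivAt φ ((x - 1) / c - log x) x := fun x hx => by
    refine ((((hasDerivAt_id x).sub_const 1).pow 2).div_const (2 * c)).sub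
      (hasDerivAt_klFun hx.ne') |>.congr_deriv ?_
    simp only [id, Nat.cast_ofNat]
    field_simp
    ring
  have hφc : Continuous φ := by fun_prop
  have hφ1 : φ 1 = 0 := by simp [φ, klFun_one]
  suffices 0 ≤ φ y by linarith
  rcases le_total 1 y with h1 | h1
  · have hmono : MonotoneOn φ (Set.Ici 1) := by
      refine monotoneOn_of_hasDerivWithinAt_nonneg (convex_Ici 1) hφc.continuousOn
        (f' := fun x => (x - 1) / c - log x) (fun x hx => ?_) (fun x hx => ?_) <;>
        rw [interior_Ici] at hx
      · exact (hφ x (zero_lt_one.trans hx)).hasDerivWithinAt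
      · have := log_le_sub_one_of_pos (zero_lt_one.trans hx)
        have := le_div_self (sub_nonneg.mpr hx.out.le) hc hc1
        linarith
    exact hφ1 ▸ hmono Set.self_mem_Ici h1 h1
  · have hanti : AntitoneOn φ (Set.Icc c 1) := by
      refine antitoneOn_of_hasDerivWithinAt_nonpos (convex_Icc c 1) hφc.continuousOn
        (f' := fun x => (x - 1) / c - log x) (fun x hx => ?_) (fun x hx => ?_) <;>
        rw [interior_Icc] at hx
      · exact (hφ x (hc.trans hx.1)).hasDerivWithinAt
      · have hx0 : 0 < x := hc.trans hx.1
        have := one_sub_inv_le_log_of_pos hx0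
        have : (x - 1) / c ≤ (x - 1) / x := by
          rw [div_le_div_iff₀ hc hx0]
          nlinarith [hx.1, hx.2]
        have : (x - 1) / x = 1 - x⁻¹ := by field_simp
        linarith
    exact hφ1 ▸ hanti ⟨hy, h1⟩ ⟨hc1, le_rfl⟩ h1

lemma abs_max_neg_min_le {K : ℝ} (hK : 0 ≤ K) (x : ℝ) : |max (-K) (min K x)| ≤ min K |x| := by
  grind

section Measures

variable {Ω : Type*} [MeasurableSpace Ω] {P Q : Measure Ω}

lemma klDiv_le_coe_iff {C : ℝ} :
    klDiv Q P ≤ (C : EReal) ↔ Q ≪ P ∧ Integrable (llr Q P) Q ∧ ∫ ω, llr Q P ω ∂Q ≤ C := by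
  unfold klDiv
  split_ifs with h
  · simp [h]
  · simp only [top_le_iff, EReal.coe_ne_top, false_iff]
    tauto

lemma integral_le_integral_llr_add_integral_exp_sub_one [IsProbabilityMeasure P]
    [IsProbabilityMeasure Q] (hQP : Q ≪ P) (hllr : Integrable (llr Q P) Q) {h : Ω → ℝ}
    (hh : Integrable h Q) (hexp : Integrable (fun ω => exp (h ω)) P) :
    ∫ ω, h ω ∂Q ≤ ∫ ω, llr Q P ω ∂Q + ∫ ω, exp (h ω) ∂P - 1 := by
  set r : Ω → ℝ := fun ω => (Q.rnDeriv P ω).toReal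
  have hklFun : Integrable (fun ω => klFun (r ω)) P := (integrable_klFun_rnDeriv_iff hQP).mpr hllr
  have hexp1 : Integrable (fun ω => exp (h ω) - 1) P := hexp.sub (integrable_const 1)
  calc ∫ ω, h ω ∂Q = ∫ ω, r ω * h ω ∂P := (integral_rnDeriv_smul hQP).symm
    _ ≤ ∫ ω, (klFun (r ω) + (exp (h ω) - 1)) ∂P := by
        refine integral_mono ((integrable_rnDeriv_smul_iff hQP).mpr hh) (hklFun.add hexp1)
          fun ω => ?_
        have := mul_le_klFun_add_exp_sub_one (h ω) (ENNReal.toReal_nonneg : 0 ≤ r ω)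
        linarith [mul_comm (r ω) (h ω)]
    _ = ∫ ω, llr Q P ω ∂Q + ∫ ω, exp (h ω) ∂P - 1 := by
        rw [integral_add hklFun hexp1, integral_sub hexp (integrable_const 1),
          integral_klFun_rnDeriv hQP hllr]
        simp only [probReal_univ, add_sub_cancel_right, integral_const, smul_eq_mul, mul_one]
        ring

lemma integral_le_robustValue [IsProbabilityMeasure P] [IsProbabilityMeasure Q] {f : Ω → ℝ}
    {t C : ℝ} (ht : 0 < t) (hexp : Integrable (fun ω => exp (t * f ω)) P)
    (hKL : klDiv Q P ≤ C) :
    ∫ ω, f ω ∂Q ≤ robustValue P f C := by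
  refine le_csSup ⟨max 0 ((C + ∫ ω, exp (t * f ω) ∂P - 1) / t), ?_⟩
    ⟨Q, inferInstance, (klDiv_le_coe_iff.mp hKL).1, hKL, rfl⟩
  rintro _ ⟨Q', hQ', hQ'P, hKL', rfl⟩
  obtain ⟨-, hllr, hle⟩ := klDiv_le_coe_iff.mp hKL'
  by_cases hfi : Integrable f Q'
  · have := integral_le_integral_llr_add_integral_exp_sub_one hQ'P hllr (hfi.const_mul t) hexp
    rw [integral_const_mul] at this
    exact le_max_of_le_right (by rw [le_div_iff₀ ht]; linarith)
  · simp [integral_undef hfi]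

lemma isProbabilityMeasure_withDensity_ofReal {d : Ω → ℝ} (hd : Integrable d P)
    (hd0 : 0 ≤ᵐ[P] d) (hd1 : ∫ ω, d ω ∂P = 1) :
    IsProbabilityMeasure (P.withDensity fun ω => ENNReal.ofReal (d ω)) :=
  ⟨by rw [withDensity_apply _ .univ, Measure.restrict_univ,
    ← ofReal_integral_eq_lintegral_ofReal hd hd0, hd1, ENNReal.ofReal_one]⟩

lemma integral_withDensity_ofReal {d : Ω → ℝ} (hdm : Measurable d) (hd0 : ∀ ω, 0 ≤ d ω)
    (f : Ω → ℝ) :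
    ∫ ω, f ω ∂(P.withDensity fun ω => ENNReal.ofReal (d ω)) = ∫ ω, d ω * f ω ∂P := by
  rw [integral_withDensity_eq_integral_toReal_smul hdm.ennreal_ofReal
    (ae_of_all _ fun _ => ENNReal.ofReal_lt_top)]
  simp [ENNReal.toReal_ofReal (hd0 _)]

lemma klDiv_withDensity_ofReal_le [IsProbabilityMeasure P] {d : Ω → ℝ} {c : ℝ} (hc : 0 < c)
    (hc1 : c ≤ 1) (hdm : Measurable d) (hdc : ∀ ω, c ≤ d ω) (hd : Integrable d P)
    (hd1 : ∫ ω, d ω ∂P = 1) (hsq : Integrable (fun ω => (d ω - 1) ^ 2) P) :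
    klDiv (P.withDensity fun ω => ENNReal.ofReal (d ω)) P
      ≤ ((∫ ω, (d ω - 1) ^ 2 ∂P) / (2 * c) : ℝ) := by
  set Q := P.withDensity fun ω => ENNReal.ofReal (d ω)
  have hd0 : ∀ ω, 0 ≤ d ω := fun ω => hc.le.trans (hdc ω)
  have := isProbabilityMeasure_withDensity_ofReal hd (ae_of_all _ hd0) hd1
  have hQP : Q ≪ P := withDensity_absolutelyContinuous P _
  have hr : ∀ᵐ ω ∂P, klFun (Q.rnDeriv P ω).toReal = klFun (d ω) := by
    filter_upwards [Measure.rnDeriv_withDensity P hdm.ennreal_ofReal] with ω hω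
    rw [hω, ENNReal.toReal_ofReal (hd0 ω)]
  have hklFun : Integrable (fun ω => klFun (d ω)) P :=
    (hsq.div_const (2 * c)).mono' (measurable_klFun.comp hdm).aestronglyMeasurable
      (ae_of_all _ fun ω => by
        rw [Real.norm_of_nonneg (klFun_nonneg (hd0 ω))]
        exact klFun_le_sq_div hc hc1 (hdc ω))
  have hllr : Integrable (llr Q P) Q :=
    (integrable_klFun_rnDeriv_iff hQP).mp (hklFun.congr (hr.mono fun _ h => h.symm))
  rw [klDiv, if_pos ⟨hQP, hllr⟩, EReal.coe_le_coe_iff, ← integral_div]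
  calc ∫ ω, llr Q P ω ∂Q = ∫ ω, klFun (Q.rnDeriv P ω).toReal ∂P := by
        simp [integral_klFun_rnDeriv hQP hllr]
    _ = ∫ ω, klFun (d ω) ∂P := integral_congr_ae hr
    _ ≤ ∫ ω, (d ω - 1) ^ 2 / (2 * c) ∂P :=
        integral_mono hklFun (hsq.div_const _) fun ω => klFun_le_sq_div hc hc1 (hdc ω)

lemma integral_add_mul_integral_mul_le_robustValue [IsProbabilityMeasure P] {f g : Ω → ℝ}
    {t c ε B C : ℝ} (ht : 0 < t) (hexp : Integrable (fun ω => exp (t * f ω)) P)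
    (hf : Integrable f P) (hc : 0 < c) (hc1 : c ≤ 1) (hg : Measurable g)
    (hgB : ∀ ω, |g ω| ≤ B) (hg0 : ∫ ω, g ω ∂P = 0) (hε : 0 ≤ ε) (hεB : ε * B ≤ 1 - c)
    (hC : ε ^ 2 * (∫ ω, g ω ^ 2 ∂P) / (2 * c) ≤ C) :
    ∫ ω, f ω ∂P + ε * ∫ ω, g ω * f ω ∂P ≤ robustValue P f C := by
  set d : Ω → ℝ := fun ω => 1 + ε * g ω
  have hdm : Measurable d := measurable_const.add (hg.const_mul ε)
  have hdc : ∀ ω, c ≤ d ω := fun ω => by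
    have := mul_le_mul_of_nonneg_left (neg_le_of_abs_le (hgB ω)) hε
    simp only [d]
    linarith
  have hgi : Integrable g P := .of_bound hg.aestronglyMeasurable B (ae_of_all _ hgB)
  have hg2 : Integrable (fun ω => g ω ^ 2) P :=
    .of_bound (hg.pow_const 2).aestronglyMeasurable (B ^ 2) (ae_of_all _ fun ω => by
      simpa [sq_abs] using pow_le_pow_left₀ (abs_nonneg _) (hgB ω) 2)
  have hd : Integrable d P := (integrable_const 1).add (hgi.const_mul ε)
  have hd1 : ∫ ω, d ω ∂P = 1 := by
    simp [d, integral_add (integrable_const 1) (hgi.const_mul ε), integral_const_mul, hg0]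
  have hsq : (fun ω => (d ω - 1) ^ 2) = fun ω => ε ^ 2 * g ω ^ 2 := by
    ext ω
    simp only [d]
    ring
  have hgf : Integrable (fun ω => g ω * f ω) P :=
    hf.bdd_mul hg.aestronglyMeasurable (ae_of_all _ hgB)
  have := isProbabilityMeasure_withDensity_ofReal hd
    (ae_of_all _ fun ω => hc.le.trans (hdc ω)) hd1
  have hKL := klDiv_withDensity_ofReal_le hc hc1 hdm hdc hd hd1 (hsq ▸ hg2.const_mul (ε ^ 2))
  rw [hsq, integral_const_mul] at hKL
  calc ∫ ω, f ω ∂P + ε * ∫ ω, g ω * f ω ∂P = ∫ ω, d ω * f ω ∂P := by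
        rw [← integral_const_mul, ← integral_add hf (hgf.const_mul ε)]
        congr with ω
        ring
    _ = ∫ ω, f ω ∂(P.withDensity fun ω => ENNReal.ofReal (d ω)) :=
        (integral_withDensity_ofReal hdm (fun ω => hc.le.trans (hdc ω)) f).symm
    _ ≤ robustValue P f C :=
        integral_le_robustValue ht hexp (hKL.trans (EReal.coe_le_coe_iff.mpr hC))

lemma eventually_add_mul_sqrt_lt_robustValue [IsProbabilityMeasure P] {f g : Ω → ℝ}
    {t B s k : ℝ} (ht : 0 < t) (hexp : Integrable (fun ω => exp (t * f ω)) P)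
    (hf : Integrable f P) (hg : Measurable g) (hgB : ∀ ω, |g ω| ≤ B) (hg0 : ∫ ω, g ω ∂P = 0)
    (hs : 0 < s) (hg2 : ∫ ω, g ω ^ 2 ∂P ≤ s) (hk : k < (∫ ω, g ω * f ω ∂P) * √(2 / s)) :
    ∀ᶠ C in 𝓝[>] 0, ∫ ω, f ω ∂P + k * √C < robustValue P f C := by
  set r := ∫ ω, g ω * f ω ∂P
  obtain ⟨c, hkc, hc0, hc1⟩ : ∃ c, k < r * √(2 * c / s) ∧ 0 < c ∧ c < 1 := by
    have : ∀ᶠ c in 𝓝 1, k < r * √(2 * c / s) :=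
      (by fun_prop : Continuous fun c => r * √(2 * c / s)).continuousAt.eventually
        (lt_mem_nhds (by simpa using hk))
    exact ((this.filter_mono nhdsWithin_le_nhds).and (Ioo_mem_nhdsLT zero_lt_one)).exists
  set κ := √(2 * c / s)
  have hsmall : ∀ᶠ C in 𝓝 0, √C * κ * B < 1 - c :=
    (by fun_prop : Continuous fun C => √C * κ * B).continuousAt.eventually
      (gt_mem_nhds (by simpa using hc1))
  filter_upwards [hsmall.filter_mono nhdsWithin_le_nhds, self_mem_nhdsWithin] with C hCB hC
  have hKL : (√C * κ) ^ 2 * (∫ ω, g ω ^ 2 ∂P) / (2 * c) ≤ C :=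
    calc (√C * κ) ^ 2 * (∫ ω, g ω ^ 2 ∂P) / (2 * c) ≤ (√C * κ) ^ 2 * s / (2 * c) := by
          gcongr
      _ = C := by
          rw [mul_pow, Real.sq_sqrt hC.out.le, Real.sq_sqrt (by positivity)]
          field_simp
  calc ∫ ω, f ω ∂P + k * √C < ∫ ω, f ω ∂P + √C * κ * r := by
        linarith [mul_lt_mul_of_pos_left hkc (Real.sqrt_pos.mpr hC.out)]
    _ ≤ robustValue P f C := integral_add_mul_integral_mul_le_robustValue ht hexp hf hc0 hc1.le
        hg hgB hg0 (by positivity) hCB.le hKL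

lemma tendsto_integral_max_neg_min_mul_self {h : Ω → ℝ} (hm : Measurable h)
    (hh : Integrable (fun ω => h ω ^ 2) P) :
    Tendsto (fun n : ℕ => ∫ ω, max (-(n : ℝ)) (min (n : ℝ) (h ω)) * h ω ∂P) atTop
      (𝓝 (∫ ω, h ω ^ 2 ∂P)) := by
  refine tendsto_integral_of_dominated_convergence _ (fun n => by fun_prop) hh
    (fun n => ae_of_all _ fun ω => ?_) (ae_of_all _ fun ω => ?_)
  · rw [norm_mul, Real.norm_eq_abs, Real.norm_eq_abs, sq, ← abs_mul_abs_self]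
    exact mul_le_mul_of_nonneg_right
      ((abs_max_neg_min_le n.cast_nonneg (h ω)).trans (min_le_right _ _)) (abs_nonneg _)
  · refine tendsto_const_nhds.congr' ?_
    filter_upwards [tendsto_natCast_atTop_atTop.eventually_ge_atTop |h ω|] with n hn
    rw [abs_le] at hn
    rw [min_eq_right hn.2, max_eq_right hn.1, sq]

lemma exists_bounded_centered_lt_integral_mul [IsProbabilityMeasure P] {f : Ω → ℝ}
    (hf : Measurable f) (hL2 : MemLp f 2 P) {a : ℝ} (ha : a < variance f P) :
    ∃ (g : Ω → ℝ) (B : ℝ), Measurable g ∧ (∀ ω, |g ω| ≤ B) ∧ ∫ ω, g ω ∂P = 0 ∧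
      ∫ ω, g ω ^ 2 ∂P ≤ variance f P ∧ a < ∫ ω, g ω * f ω ∂P := by
  set m := ∫ ω, f ω ∂P
  have hvar : variance f P = ∫ ω, (f ω - m) ^ 2 ∂P := variance_eq_integral hf.aemeasurable
  have hfi : Integrable f P := hL2.integrable one_le_two
  have hsq : Integrable (fun ω => (f ω - m) ^ 2) P := (hL2.sub (memLp_const m)).integrable_sq
  obtain ⟨n, hn⟩ := ((tendsto_integral_max_neg_min_mul_self (hf.sub_const m) hsq).eventually
    (eventually_gt_nhds (hvar ▸ ha))).exists
  set T : Ω → ℝ := fun ω => max (-(n : ℝ)) (min (n : ℝ) (f ω - m))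
  have hTm : Measurable T := by fun_prop
  have hTn : ∀ ω, |T ω| ≤ n := fun ω =>
    (abs_max_neg_min_le n.cast_nonneg _).trans (min_le_left _ _)
  have hT2 : ∀ ω, T ω ^ 2 ≤ (f ω - m) ^ 2 := fun ω =>
    sq_le_sq.mpr ((abs_max_neg_min_le n.cast_nonneg _).trans (min_le_right _ _))
  have hTi : Integrable T P := .of_bound hTm.aestronglyMeasurable n (ae_of_all _ hTn)
  have hTf : Integrable (fun ω => T ω * f ω) P :=
    hfi.bdd_mul hTm.aestronglyMeasurable (ae_of_all _ hTn)
  have hmean : |∫ ω, T ω ∂P| ≤ n := by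
    simpa using norm_integral_le_of_norm_le_const (μ := P) (f := T) (ae_of_all _ hTn)
  refine ⟨fun ω => T ω - ∫ ω, T ω ∂P, 2 * n, hTm.sub_const _, fun ω => ?_, ?_, ?_, ?_⟩
  · linarith [abs_sub (T ω) (∫ ω, T ω ∂P), hTn ω]
  · simp [integral_sub hTi (integrable_const _)]
  · calc ∫ ω, (T ω - ∫ ω, T ω ∂P) ^ 2 ∂P = variance T P :=
          (variance_eq_integral hTm.aemeasurable).symm
      _ ≤ ∫ ω, T ω ^ 2 ∂P := variance_le_expectation_sq hTm.aestronglyMeasurable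
      _ ≤ ∫ ω, (f ω - m) ^ 2 ∂P := by
          refine integral_mono (hsq.mono' (by fun_prop) (ae_of_all _ fun ω => ?_)) hsq hT2
          rw [Real.norm_of_nonneg (sq_nonneg _)]
          exact hT2 ω
      _ = variance f P := hvar.symm
  · calc a < ∫ ω, T ω * (f ω - m) ∂P := hn
      _ = ∫ ω, T ω * f ω ∂P - (∫ ω, T ω ∂P) * m := by
          simp_rw [mul_sub]
          rw [integral_sub hTf (hTi.mul_const m), integral_mul_const]
      _ = ∫ ω, (T ω - ∫ ω, T ω ∂P) * f ω ∂P := by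
          simp_rw [sub_mul]
          rw [integral_sub hTf (hfi.const_mul _), integral_const_mul]

end Measures

/-- Sharpness of the small-KL expansion: for every `k < √(2 Var_P f)` there is `C₀ > 0`
such that `S_f(C) > m + k √C` for all `C ∈ (0, C₀)`. -/
theorem sharp_small_KL_sharpness {Ω : Type*} [MeasurableSpace Ω] (P : Measure Ω)
    [IsProbabilityMeasure P] (f : Ω → ℝ) (hf : Measurable f)
    (hmgf : ∃ ε > 0, ∀ t : ℝ, |t| < ε → Integrable (fun ω => Real.exp (t * f ω)) P)
    (hvar : 0 < variance f P) :
    ∀ k : ℝ, k < Real.sqrt (2 * variance f P) →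
      ∃ C₀ > (0 : ℝ), ∀ C : ℝ, C ∈ Set.Ioo 0 C₀ →
        robustValue P f C > (∫ ω, f ω ∂P) + k * Real.sqrt C := by
  intro k hk
  obtain ⟨t, ht, hexp⟩ : ∃ t > 0, Integrable (fun ω => exp (t * f ω)) P := by
    obtain ⟨ε, hε, hmgf⟩ := hmgf
    exact ⟨ε / 2, half_pos hε, hmgf _ (by rw [abs_of_pos (half_pos hε)]; exact half_lt_self hε)⟩
  have hL2 : MemLp f 2 P := memLp_two_of_variance_ne_zero hf.aestronglyMeasurable hvar.ne'
  have hκ : 0 < √(2 / variance f P) := Real.sqrt_pos.mpr (div_pos two_pos hvar)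
  have hka : k / √(2 / variance f P) < variance f P := by
    rw [div_lt_iff₀ hκ]
    nth_rewrite 1 [← Real.sqrt_sq hvar.le]
    rwa [← Real.sqrt_mul (sq_nonneg _), sq, mul_assoc, mul_div_cancel₀ _ hvar.ne', mul_comm]
  obtain ⟨g, B, hg, hgB, hg0, hg2, hgf⟩ := exists_bounded_centered_lt_integral_mul hf hL2 hka
  exact (nhdsGT_basis 0).eventually_iff.mp <| eventually_add_mul_sqrt_lt_robustValue ht hexp
    (hL2.integrable one_le_two) hg hgB hg0 hvar hg2 ((div_lt_iff₀ hκ).mp hgf)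
end

section
/- Fix c > 0 and δ ∈ ℝ with c + δ > 0. Then the sequence n ↦ n·kl((c+δ)/n, c/n) converges, as n → ∞ (Filter.atTop), to (c+δ)·log((c+δ)/c) − δ. -/
open Filter Real

/-- Bernoulli Kullback--Leibler divergence `kl(p,q) = p log(p/q) + (1−p) log((1−p)/(1−q))`. -/
noncomputable def bernKL (p q : ℝ) : ℝ :=
  p * Real.log (p / q) + (1 - p) * Real.log ((1 - p) / (1 - q))

open Topology

/-! The factor `n` cancels in the first term of `n · kl(a/n, b/n)`, leaving `a log(a/b)`
exactly, while the second term is `(1 - a/n)(n log(1 - a/n) - n log(1 - b/n))`, whose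
bracket tends to `-a + b` because `n log(1 + x/n) → x`. -/

theorem tendsto_natCast_mul_log_one_sub_div (x : ℝ) :
    Tendsto (fun n : ℕ => (n : ℝ) * log (1 - x / n)) atTop (𝓝 (-x)) := by
  simpa only [Function.comp_def, neg_div, ← sub_eq_add_neg] using
    (tendsto_mul_log_one_add_div_atTop (-x)).comp tendsto_natCast_atTop_atTop

lemma mul_bernKL_div_div_eq (a b : ℝ) {n : ℝ} (hn : n ≠ 0) (ha : a / n ≠ 1) (hb : b / n ≠ 1) :
    n * bernKL (a / n) (b / n) =
      a * log (a / b) + (1 - a / n) * (n * log (1 - a / n) - n * log (1 - b / n)) := by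
  rw [bernKL, div_div_div_cancel_right₀ hn,
    log_div (sub_ne_zero.2 ha.symm) (sub_ne_zero.2 hb.symm)]
  field_simp

theorem tendsto_natCast_mul_bernKL_div_div (a b : ℝ) :
    Tendsto (fun n : ℕ => (n : ℝ) * bernKL (a / n) (b / n)) atTop
      (𝓝 (a * log (a / b) + b - a)) := by
  have hdiv (x : ℝ) : Tendsto (fun n : ℕ => x / (n : ℝ)) atTop (𝓝 0) :=
    tendsto_const_nhds.div_atTop tendsto_natCast_atTop_atTop
  have hlim := tendsto_const_nhds (x := a * log (a / b)) |>.add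
    (((hdiv a).const_sub 1).mul
      ((tendsto_natCast_mul_log_one_sub_div a).sub (tendsto_natCast_mul_log_one_sub_div b)))
  rw [show a * log (a / b) + b - a = a * log (a / b) + (1 - 0) * (-a - -b) by ring]
  refine hlim.congr' ?_
  filter_upwards [eventually_ne_atTop 0, (hdiv a).eventually_ne zero_ne_one,
    (hdiv b).eventually_ne zero_ne_one] with n hn ha hb
  exact (mul_bernKL_div_div_eq a b (Nat.cast_ne_zero.2 hn) ha hb).symm

theorem per_edge_kl_limit_general (c δ : ℝ) :
    Tendsto (fun n : ℕ => (n : ℝ) * bernKL ((c + δ) / n) (c / n)) atTop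
      (nhds ((c + δ) * Real.log ((c + δ) / c) - δ)) := by
  convert tendsto_natCast_mul_bernKL_div_div (c + δ) c using 2
  ring

/-- Per-edge KL limit: `n · kl((c+δ)/n, c/n) → (c+δ) log((c+δ)/c) − δ` as `n → ∞`. -/
theorem per_edge_kl_limit (c δ : ℝ) (hc : 0 < c) (hcδ : 0 < c + δ) :
    Tendsto (fun n : ℕ => (n : ℝ) * bernKL ((c + δ) / n) (c / n)) atTop
      (nhds ((c + δ) * Real.log ((c + δ) / c) - δ)) :=
  per_edge_kl_limit_general c δ
end
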